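/- arXiv:2505.17325 — 5 statements merged into one kernel-verified Lean document; each statement's English description precedes it below -/
import Mathlib

section
/- Let C be a finite nonempty set and T ⊆ C × C × C. Suppose T ⊆ (L × M × R) ∪ (L × M × B) ∪ (B × M × R) for pairwise disjoint subsets L, M, R, B of C. Then |T| ≤ 4|C|³/81. -/
/-- If `T ⊆ (L × M × R) ∪ (L × M × B) ∪ (B × M × R)` for pairwise
disjoint subsets `L, M, R, B` of a finite nonempty color set `C`, then
`|T| ≤ 4|C|³/81`. -/
theorem stmt0 {α : Type*} [Fintype α] [DecidableEq α] [Nonempty α]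
    (T : Finset (α × α × α)) (L M R B : Finset α)
    (hLM : Disjoint L M) (hLR : Disjoint L R) (hLB : Disjoint L B)
    (hMR : Disjoint M R) (hMB : Disjoint M B) (hRB : Disjoint R B)
    (hT : ∀ t ∈ T,
      (t.1 ∈ L ∧ t.2.1 ∈ M ∧ t.2.2 ∈ R) ∨
      (t.1 ∈ L ∧ t.2.1 ∈ M ∧ t.2.2 ∈ B) ∨
      (t.1 ∈ B ∧ t.2.1 ∈ M ∧ t.2.2 ∈ R)) :
    (T.card : ℝ) ≤ 4 * (Fintype.card α : ℝ) ^ 3 / 81 := by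
  have hsub : T ⊆ (L ×ˢ (M ×ˢ R)) ∪ (L ×ˢ (M ×ˢ B)) ∪ (B ×ˢ (M ×ˢ R)) := by
    intro t ht
    rcases hT t ht with h | h | h <;> simp [Finset.mem_product, h.1, h.2.1, h.2.2]
  have hcard : T.card ≤ L.card * M.card * R.card + L.card * M.card * B.card
      + B.card * M.card * R.card := by
    calc T.card ≤ ((L ×ˢ (M ×ˢ R)) ∪ (L ×ˢ (M ×ˢ B)) ∪ (B ×ˢ (M ×ˢ R))).card :=
          Finset.card_le_card hsub
      _ ≤ ((L ×ˢ (M ×ˢ R)) ∪ (L ×ˢ (M ×ˢ B))).card + (B ×ˢ (M ×ˢ R)).card :=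
          Finset.card_union_le _ _
      _ ≤ (L ×ˢ (M ×ˢ R)).card + (L ×ˢ (M ×ˢ B)).card + (B ×ˢ (M ×ˢ R)).card := by
          have := Finset.card_union_le (L ×ˢ (M ×ˢ R)) (L ×ˢ (M ×ˢ B))
          omega
      _ = L.card * M.card * R.card + L.card * M.card * B.card
          + B.card * M.card * R.card := by
          simp [Finset.card_product, mul_assoc]
  have hsum : L.card + M.card + R.card + B.card ≤ Fintype.card α := by
    have h1 : ((L ∪ M ∪ R ∪ B).card : ℕ) ≤ Fintype.card α :=
      Finset.card_le_univ _
    rwa [Finset.card_union_of_disjoint (by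
        simp only [Finset.disjoint_union_left]
        exact ⟨⟨hLB, hMB⟩, hRB⟩),
      Finset.card_union_of_disjoint (by
        simp only [Finset.disjoint_union_left]
        exact ⟨hLR, hMR⟩),
      Finset.card_union_of_disjoint hLM] at h1
  set l := (L.card : ℝ); set m := (M.card : ℝ); set r := (R.card : ℝ)
  set b := (B.card : ℝ); set n := (Fintype.card α : ℝ)
  have hl : 0 ≤ l := Nat.cast_nonneg _
  have hm : 0 ≤ m := Nat.cast_nonneg _
  have hr : 0 ≤ r := Nat.cast_nonneg _
  have hb : 0 ≤ b := Nat.cast_nonneg _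
  have hsum' : l + m + r + b ≤ n := by
    have := hsum
    push_cast [l, m, r, b, n]
    exact_mod_cast hsum
  have hcard' : (T.card : ℝ) ≤ l * m * r + l * m * b + b * m * r := by
    simp only [l, m, r, b]
    exact_mod_cast hcard
  have key : l * m * r + l * m * b + b * m * r ≤ 4 * n ^ 3 / 81 := by
    have hmn : m ≤ n := by linarith
    have h3 : 3 * (l * r + l * b + b * r) ≤ (l + r + b) ^ 2 := by nlinarith [sq_nonneg (l - r), sq_nonneg (l - b), sq_nonneg (r - b)]
    have h4 : m * (l + r + b) ^ 2 ≤ m * (n - m) ^ 2 := by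
      have : (l + r + b) ^ 2 ≤ (n - m) ^ 2 := by nlinarith
      nlinarith
    have h5 : 27 * (m * (n - m) ^ 2) ≤ 4 * n ^ 3 := by
      nlinarith [sq_nonneg (3 * m - n), hmn]
    nlinarith
  linarith
end

section
/- For all nonnegative reals a, b, c, d with a + b + c + d = 1, we have abc + abd + dbc ≤ 4/81, with equality when a = c = d = 2/9 and b = 1/3. -/
/-- For nonnegative reals `a, b, c, d` summing to `1`,
`abc + abd + dbc ≤ 4/81`, with equality at `a = c = d = 2/9`, `b = 1/3`. -/
theorem stmt1 :
    (∀ a b c d : ℝ, 0 ≤ a → 0 ≤ b → 0 ≤ c → 0 ≤ d → a + b + c + d = 1 →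
      a * b * c + a * b * d + d * b * c ≤ 4 / 81) ∧
    ((2/9 : ℝ) * (1/3) * (2/9) + (2/9) * (1/3) * (2/9) + (2/9) * (1/3) * (2/9)
      = 4 / 81) := by
  constructor
  · intro a b c d ha hb hc hd hsum
    nlinarith [sq_nonneg (a-c), sq_nonneg (a-d), sq_nonneg (c-d), sq_nonneg (b-1/3),
      mul_nonneg hb (sq_nonneg (a+c+d-2/3)), mul_nonneg hb (sq_nonneg (a-c)),
      mul_nonneg hb (sq_nonneg (a-d)), mul_nonneg hb (sq_nonneg (c-d)),
      mul_nonneg (mul_nonneg ha hb) hc, mul_nonneg (mul_nonneg ha hb) hd,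
      mul_nonneg (mul_nonneg hd hb) hc]
  · norm_num
end

section
/- Let P be a palette (C, T). If no color of C is both the middle color of some feasible triple and the left color of some feasible triple, no color is both the middle color of some triple and the right color of some triple, and there is no pair of (not necessarily distinct) triples (x,y,z), (x',y',z') ∈ T with z = x' where additionally x appears as a right color of some triple, then |T| ≤ 4|C|³/81. -/
/-- Let `P = (C,T)` be a palette. If no color is both a middle color
and a left color of feasible triples, no color is both a middle color and a right
color, and there is no pair of triples `(x,y,z), (x',y',z') ∈ T` with `z = x'`
where `x` also appears as a right color of some triple, then `|T| ≤ 4|C|³/81`. -/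
theorem stmt4 {α : Type*} [Fintype α] [DecidableEq α]
    (T : Finset (α × α × α))
    (h1 : ¬ ∃ c : α, (∃ t ∈ T, t.2.1 = c) ∧ (∃ t ∈ T, t.1 = c))
    (h2 : ¬ ∃ c : α, (∃ t ∈ T, t.2.1 = c) ∧ (∃ t ∈ T, t.2.2 = c))
    (h3 : ¬ ∃ t ∈ T, ∃ t' ∈ T, t.2.2 = t'.1 ∧ ∃ t'' ∈ T, t''.2.2 = t.1) :
    (T.card : ℝ) ≤ 4 * (Fintype.card α : ℝ) ^ 3 / 81 := by
  classical
  set L := T.image (fun t => t.1) with hLdef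
  set M := T.image (fun t => t.2.1) with hMdef
  set R := T.image (fun t => t.2.2) with hRdef
  have hmemL : ∀ t ∈ T, t.1 ∈ L := fun t ht => Finset.mem_image_of_mem _ ht
  have hmemM : ∀ t ∈ T, t.2.1 ∈ M := fun t ht => Finset.mem_image_of_mem _ ht
  have hmemR : ∀ t ∈ T, t.2.2 ∈ R := fun t ht => Finset.mem_image_of_mem _ ht
  -- disjointness
  have hML : Disjoint M L := by
    rw [Finset.disjoint_left]
    intro x hxM hxL
    simp only [hMdef, hLdef, Finset.mem_image] at hxM hxL
    exact h1 ⟨x, ⟨hxM.choose, hxM.choose_spec.1, hxM.choose_spec.2⟩,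
      ⟨hxL.choose, hxL.choose_spec.1, hxL.choose_spec.2⟩⟩
  have hMR : Disjoint M R := by
    rw [Finset.disjoint_left]
    intro x hxM hxR
    simp only [hMdef, hRdef, Finset.mem_image] at hxM hxR
    exact h2 ⟨x, ⟨hxM.choose, hxM.choose_spec.1, hxM.choose_spec.2⟩,
      ⟨hxR.choose, hxR.choose_spec.1, hxR.choose_spec.2⟩⟩
  -- split T
  set A := T.filter (fun t => t.1 ∈ R) with hAdef
  set B := T.filter (fun t => t.1 ∉ R) with hBdef
  have hTsplit : A.card + B.card = T.card :=
    Finset.card_filter_add_card_filter_not _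
  have hAsub : A ⊆ (L ∩ R) ×ˢ (M ×ˢ (R \ L)) := by
    intro t ht
    rw [hAdef, Finset.mem_filter] at ht
    obtain ⟨htT, ht1R⟩ := ht
    have hzL : t.2.2 ∉ L := by
      intro hzl
      simp only [hLdef, Finset.mem_image] at hzl
      obtain ⟨t', ht', heq⟩ := hzl
      simp only [hRdef, Finset.mem_image] at ht1R
      obtain ⟨t'', ht'', heq''⟩ := ht1R
      exact h3 ⟨t, htT, t', ht', heq.symm, t'', ht'', heq''⟩
    simp only [Finset.mem_product, Finset.mem_inter, Finset.mem_sdiff]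
    exact ⟨⟨hmemL t htT, ht1R⟩, hmemM t htT, hmemR t htT, hzL⟩
  have hBsub : B ⊆ (L \ R) ×ˢ (M ×ˢ R) := by
    intro t ht
    rw [hBdef, Finset.mem_filter] at ht
    obtain ⟨htT, ht1R⟩ := ht
    simp only [Finset.mem_product, Finset.mem_sdiff]
    exact ⟨⟨hmemL t htT, ht1R⟩, hmemM t htT, hmemR t htT⟩
  have hAcard : A.card ≤ (L ∩ R).card * (M.card * (R \ L).card) := by
    calc A.card ≤ ((L ∩ R) ×ˢ (M ×ˢ (R \ L))).card := Finset.card_le_card hAsub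
    _ = (L ∩ R).card * (M.card * (R \ L).card) := by
        simp [Finset.card_product]
  have hBcard : B.card ≤ (L \ R).card * (M.card * R.card) := by
    calc B.card ≤ ((L \ R) ×ˢ (M ×ˢ R)).card := Finset.card_le_card hBsub
    _ = (L \ R).card * (M.card * R.card) := by simp [Finset.card_product]
  -- cardinality budget
  have hRsplit : (R ∩ L).card + (R \ L).card = R.card :=
    Finset.card_inter_add_card_sdiff R L
  have hLR : (L \ R).card + R.card = (L ∪ R).card := Finset.card_sdiff_add_card L R
  have hUnion : (L ∪ R).card + M.card ≤ Fintype.card α := by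
    have hdisj : Disjoint (L ∪ R) M :=
      Finset.disjoint_union_left.mpr ⟨hML.symm, hMR.symm⟩
    calc (L ∪ R).card + M.card = ((L ∪ R) ∪ M).card :=
          (Finset.card_union_of_disjoint hdisj).symm
    _ ≤ Fintype.card α := Finset.card_le_univ _
  have hRLcomm : (R ∩ L).card = (L ∩ R).card := by rw [Finset.inter_comm]
  -- pass to reals
  set a : ℝ := ((L \ R).card : ℝ) with hadef
  set b : ℝ := ((L ∩ R).card : ℝ) with hbdef
  set c : ℝ := ((R \ L).card : ℝ) with hcdef
  set m : ℝ := (M.card : ℝ) with hmdef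
  set n : ℝ := ((Fintype.card α : ℕ) : ℝ) with hndef
  have ha0 : 0 ≤ a := Nat.cast_nonneg _
  have hb0 : 0 ≤ b := Nat.cast_nonneg _
  have hc0 : 0 ≤ c := Nat.cast_nonneg _
  have hm0 : 0 ≤ m := Nat.cast_nonneg _
  have hsum : a + b + c + m ≤ n := by
    rw [hadef, hbdef, hcdef, hmdef, hndef]
    have h := hUnion
    rw [← hLR, ← hRsplit, hRLcomm] at h
    have h' : (L \ R).card + (L ∩ R).card + (R \ L).card + M.card ≤ Fintype.card α := by
      omega
    exact_mod_cast h'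
  have hT : (T.card : ℝ) ≤ b * (m * c) + a * (m * (b + c)) := by
    have h1' : (T.card : ℝ) = (A.card : ℝ) + (B.card : ℝ) := by
      rw [← hTsplit]; push_cast; ring
    have hA' : (A.card : ℝ) ≤ b * (m * c) := by
      rw [hbdef, hmdef, hcdef]; exact_mod_cast hAcard
    have hB' : (B.card : ℝ) ≤ a * (m * (b + c)) := by
      have hRc : (R.card : ℝ) = b + c := by
        rw [hbdef, hcdef, ← hRLcomm]; exact_mod_cast hRsplit.symm
      have := hBcard
      rw [hadef, hmdef, ← hRc]
      exact_mod_cast this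
    linarith
  have key : b * (m * c) + a * (m * (b + c)) ≤ 4 * n ^ 3 / 81 := by
    have hn : a + b + c + m ≤ n := hsum
    nlinarith [sq_nonneg (a - b), sq_nonneg (b - c), sq_nonneg (a - c),
      sq_nonneg (a + b + c - 2 * m),
      mul_nonneg hm0 (sq_nonneg (a - b)),
      mul_nonneg hm0 (sq_nonneg (b - c)),
      mul_nonneg hm0 (sq_nonneg (a - c)),
      mul_nonneg (mul_nonneg hm0 hm0) hm0,
      mul_nonneg (add_nonneg (add_nonneg ha0 hb0) hc0) (sq_nonneg (a + b + c - 2 * m)),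
      mul_nonneg hm0 (sq_nonneg (a + b + c - 2 * m)),
      mul_nonneg (add_nonneg (add_nonneg (add_nonneg ha0 hb0) hc0) hm0) (sq_nonneg (a + b + c - 2 * m)),
      pow_le_pow_left₀ (by positivity : (0:ℝ) ≤ a + b + c + m) hn 3]
  linarith
end

section
/- The ordered 3-uniform hypergraph K₄⁽³⁾⁻ on vertices v₁ ≺ v₂ ≺ v₃ ≺ v₄ with edges {v₁,v₂,v₃}, {v₁,v₂,v₄}, {v₁,v₃,v₄} is not (P × inv(P))-colorable for any vertex ordering, where P is the palette with colors {α,β} and triples {(α,β,α),(α,β,β)}. -/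
/-- Colorability of an ordered 3-uniform hypergraph (order `r`, edges `E`) by a
palette with triple set `T`. -/
def OrdColorable {V C : Type*} [DecidableEq V] (r : V → V → Prop)
    (E : Set (Finset V)) (T : Set (C × C × C)) : Prop :=
  ∃ χ : V → V → C, ∀ u v w : V, r u v → r v w →
    ({u, v, w} : Finset V) ∈ E → (χ u v, χ u w, χ v w) ∈ T

/-- The palette `P` with colors `{α, β}` (`α = 0`, `β = 1`) and triples
`{(α,β,α), (α,β,β)}`. -/
def TP : Set (Fin 2 × Fin 2 × Fin 2) := {(0, 1, 0), (0, 1, 1)}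

/-- The inverse palette `inv(P)`. -/
def TPinv : Set (Fin 2 × Fin 2 × Fin 2) := {t | (t.2.2, t.2.1, t.1) ∈ TP}

/-- The product palette `P × inv(P)`. -/
def TProd : Set ((Fin 2 × Fin 2) × (Fin 2 × Fin 2) × (Fin 2 × Fin 2)) :=
  {t | (t.1.1, t.2.1.1, t.2.2.1) ∈ TP ∧ (t.1.2, t.2.1.2, t.2.2.2) ∈ TPinv}

/-- The ordered hypergraph `K₄⁽³⁾⁻` on vertices `0 < 1 < 2 < 3` with edges
`{0,1,2}, {0,1,3}, {0,2,3}`. -/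
def K43minus : Set (Finset (Fin 4)) := {{0, 1, 2}, {0, 1, 3}, {0, 2, 3}}

/-- Decidable version of the edge predicate of `K43minus`. -/
def edgeP (x : Finset (Fin 4)) : Prop :=
  x = {0, 1, 2} ∨ x = {0, 1, 3} ∨ x = {0, 2, 3}

instance : DecidablePred edgeP := fun x => by unfold edgeP; infer_instance

lemma edgeP_mem {x : Finset (Fin 4)} (h : edgeP x) : x ∈ K43minus := by
  simp only [K43minus, Set.mem_insert_iff, Set.mem_singleton_iff]; exact h

/-- For every ordering (permutation) of the four vertices, some edge of
`K43minus` has its min–max pair equal to an outer pair of another edge. -/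
lemma key : ∀ σ : Equiv.Perm (Fin 4), ∃ a b c d e f : Fin 4,
    a < b ∧ b < c ∧ d < e ∧ e < f ∧
    edgeP {σ a, σ b, σ c} ∧ edgeP {σ d, σ e, σ f} ∧
    ((σ a = σ d ∧ σ c = σ e) ∨ (σ a = σ e ∧ σ c = σ f)) := by decide

/-- The only middle color of `P × inv(P)` is `(β,β) = (1,1)`, while left colors
have first coordinate `0` and right colors have second coordinate `0`. -/
lemma tprod_facts {x y z : Fin 2 × Fin 2} (h : (x, y, z) ∈ TProd) :
    y = (1, 1) ∧ x.1 = 0 ∧ z.2 = 0 := by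
  obtain ⟨h1, h2⟩ := h
  simp only [TP, TPinv, Set.mem_insert_iff, Set.mem_singleton_iff, Set.mem_setOf_eq,
    Prod.mk.injEq] at h1 h2
  obtain ⟨y1, y2⟩ := y
  rcases h1 with ⟨hx, hy, hz⟩ | ⟨hx, hy, hz⟩ <;>
    rcases h2 with ⟨hz', hy', hx'⟩ | ⟨hz', hy', hx'⟩ <;>
    simp_all [Prod.ext_iff]

/-- `K₄⁽³⁾⁻` is not `(P × inv(P))`-colorable for any vertex
ordering. -/
theorem stmt10 :
    ¬ ∃ l : LinearOrder (Fin 4), OrdColorable (fun a b => l.lt a b) K43minus TProd := by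
  rintro ⟨l, hcol⟩
  obtain ⟨χ, h⟩ := hcol
  let iso := @monoEquivOfFin (Fin 4) _ l 4 rfl
  have hmono : ∀ i j : Fin 4, i < j → l.lt (iso i) (iso j) := fun i j hij =>
    @OrderIso.strictMono (Fin 4) (Fin 4) _ l.toPartialOrder.toPreorder iso i j hij
  obtain ⟨a, b, c, d, e, f, hab, hbc, hde, hef, h1, h2, hcase⟩ := key iso.toEquiv
  have H1 := tprod_facts (h _ _ _ (hmono _ _ hab) (hmono _ _ hbc) (edgeP_mem h1))
  have H2 := tprod_facts (h _ _ _ (hmono _ _ hde) (hmono _ _ hef) (edgeP_mem h2))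
  rcases hcase with ⟨hd, he⟩ | ⟨hd, he⟩
  · have hd' : (iso a : Fin 4) = iso d := hd
    have he' : (iso c : Fin 4) = iso e := he
    rw [hd', he'] at H1
    rw [H1.1] at H2
    exact absurd H2.2.1 (by decide)
  · have hd' : (iso a : Fin 4) = iso e := hd
    have he' : (iso c : Fin 4) = iso f := he
    rw [hd', he'] at H1
    rw [H1.1] at H2
    exact absurd H2.2.2 (by decide)
end

section
/- Let κ ≥ 1, let ε ≤ 2/κ², and consider a partition V₁ ∪̇ ··· ∪̇ V_k refining a partition U₁ ∪̇ ··· ∪̇ U_κ such that each U_i contains exactly k/κ of the parts V_j. If a set B of pairs {j, j'} ⊆ [k] of 'bad' pairs has size at most ε·C(k,2), then there exist indices j₁,…,j_κ with V_{j_i} ⊆ U_i for each i and no pair {j_i, j_{i'}}, i ≠ i', belonging to B. -/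
/-!
Write `m = k / κ`. Among the `m ^ κ` ways of choosing one index in each class, a bad pair
`{a, b}` whose ends lie in different classes is picked by exactly `m ^ (κ - 2)` of them, and
one inside a single class is never picked. So a union bound leaves a good choice as soon as
`|B| < m ^ 2`, and `|B| ≤ ε·C(k,2) ≤ (k² - k) / κ² < m ^ 2` since `ε ≤ 2 / κ²`.
-/

open Finset

lemma Fintype.card_filter_piFinset_eq_and_eq_of_mem {ι α : Type*} [Fintype ι] [DecidableEq ι]
    [DecidableEq α] {t : ι → Finset α} {m : ℕ} (ht : ∀ i, #(t i) = m) {i i' : ι}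
    (hii' : i ≠ i') {a b : α} (ha : a ∈ t i) (hb : b ∈ t i') :
    #{f ∈ Fintype.piFinset t | f i = a ∧ f i' = b} = m ^ (Fintype.card ι - 2) := by
  rw [← filter_filter, ← Fintype.piFinset_update_singleton_eq_filter_piFinset_eq _ _ ha,
    Fintype.card_filter_piFinset_eq_of_mem (Function.update t i {a}) i'
      (by simpa [Function.update_of_ne hii'.symm] using hb),
    ← mul_prod_erase _ _ (mem_erase.2 ⟨hii', mem_univ i⟩)]
  have hrest : ∀ j ∈ (univ.erase i').erase i, #(Function.update t i {a} j) = m :=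
    fun j hj ↦ by rw [Function.update_of_ne (ne_of_mem_erase hj), ht]
  rw [Finset.prod_congr rfl hrest, Finset.prod_const,
    card_erase_of_mem (mem_erase.2 ⟨hii', mem_univ i⟩), card_erase_of_mem (mem_univ _),
    Finset.card_univ, Function.update_self, card_singleton, one_mul]
  rfl

lemma ne_and_apply_part_eq_of_sym2_eq {ι α : Type*} {part : α → ι} {f : ι → α}
    (hf : ∀ i, part (f i) = i) {i i' : ι} (hii' : i ≠ i') {a b : α}
    (h : s(f i, f i') = s(a, b)) :
    part a ≠ part b ∧ f (part a) = a ∧ f (part b) = b := by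
  rcases Sym2.eq_iff.1 h with ⟨rfl, rfl⟩ | ⟨rfl, rfl⟩ <;> simp [hf, hii', hii'.symm]

section FiberSections

variable {ι α : Type*} [Fintype ι] [DecidableEq ι] [Fintype α]

def fiberSections (part : α → ι) : Finset (ι → α) :=
  Fintype.piFinset fun i ↦ {a | part a = i}

variable {part : α → ι} {m : ℕ}

@[simp]
lemma mem_fiberSections {f : ι → α} : f ∈ fiberSections part ↔ ∀ i, part (f i) = i := by
  simp [fiberSections]

lemma card_fiberSections (hm : ∀ i, #{a | part a = i} = m) :
    #(fiberSections part) = m ^ Fintype.card ι := by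
  simp [fiberSections, hm]

variable [DecidableEq α]

lemma card_fiberSections_through_mul_sq_le (hm : ∀ i, #{a | part a = i} = m) (p : Sym2 α) :
    #{f ∈ fiberSections part | ∃ i i', i ≠ i' ∧ s(f i, f i') = p} * m ^ 2 ≤
      m ^ Fintype.card ι := by
  induction p using Sym2.ind with | _ a b => ?_
  by_cases hab : part a = part b
  · rw [filter_eq_empty_iff.2 fun f hf ⟨i, i', hii', h⟩ ↦
      (ne_and_apply_part_eq_of_sym2_eq (mem_fiberSections.1 hf) hii' h).1 hab]
    simp
  have hsub : {f ∈ fiberSections part | ∃ i i', i ≠ i' ∧ s(f i, f i') = s(a, b)} ⊆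
      {f ∈ fiberSections part | f (part a) = a ∧ f (part b) = b} :=
    monotone_filter_right _ fun f hf ⟨i, i', hii', h⟩ ↦
      (ne_and_apply_part_eq_of_sym2_eq (mem_fiberSections.1 hf) hii' h).2
  have hcard : #{f ∈ fiberSections part | f (part a) = a ∧ f (part b) = b} =
      m ^ (Fintype.card ι - 2) :=
    Fintype.card_filter_piFinset_eq_and_eq_of_mem hm hab (by simp) (by simp)
  have htwo : 2 ≤ Fintype.card ι := Fintype.one_lt_card_iff.2 ⟨_, _, hab⟩
  calc _ ≤ m ^ (Fintype.card ι - 2) * m ^ 2 :=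
        Nat.mul_le_mul_right _ ((card_le_card hsub).trans hcard.le)
    _ = m ^ Fintype.card ι := by rw [← pow_add, Nat.sub_add_cancel htwo]

theorem exists_fiberSection_forall_sym2_notMem (hm : ∀ i, #{a | part a = i} = m)
    (B : Finset (Sym2 α)) (hB : #B < m ^ 2) :
    ∃ f : ι → α, (∀ i, part (f i) = i) ∧ ∀ i i', i ≠ i' → s(f i, f i') ∉ B := by
  set hits : Sym2 α → Finset (ι → α) :=
    fun p ↦ {f ∈ fiberSections part | ∃ i i', i ≠ i' ∧ s(f i, f i') = p}
  have hm0 : 0 < m := Nat.pos_of_ne_zero (by rintro rfl; simp at hB)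
  have hbad : #(B.biUnion hits) < #(fiberSections part) := by
    refine Nat.lt_of_mul_lt_mul_right (a := m ^ 2) ?_
    calc #(B.biUnion hits) * m ^ 2 ≤ (∑ p ∈ B, #(hits p)) * m ^ 2 :=
          Nat.mul_le_mul_right _ card_biUnion_le
      _ = ∑ p ∈ B, #(hits p) * m ^ 2 := sum_mul ..
      _ ≤ #B * m ^ Fintype.card ι := by
          simpa using sum_le_sum fun p _ ↦ card_fiberSections_through_mul_sq_le hm p
      _ < m ^ 2 * m ^ Fintype.card ι := Nat.mul_lt_mul_of_pos_right hB (pow_pos hm0 _)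
      _ = _ := by rw [card_fiberSections hm, mul_comm]
  obtain ⟨f, hf, hfB⟩ := exists_mem_notMem_of_card_lt_card hbad
  exact ⟨f, mem_fiberSections.1 hf, fun i i' hii' hp ↦
    hfB (mem_biUnion.2 ⟨_, hp, mem_filter.2 ⟨hf, i, i', hii', rfl⟩⟩)⟩

end FiberSections

lemma lt_div_sq_of_le_mul_choose_two {κ k : ℕ} (hκ : 0 < κ) (hk : 0 < k) {ε x : ℝ}
    (hε : ε ≤ 2 / κ ^ 2) (hx : x ≤ ε * k.choose 2) : x < ((k : ℝ) / κ) ^ 2 := by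
  have hk' : (0 : ℝ) < k := by exact_mod_cast hk
  calc x ≤ 2 / κ ^ 2 * k.choose 2 := hx.trans (by gcongr)
    _ = (k ^ 2 - k) / κ ^ 2 := by rw [Nat.cast_choose_two]; ring
    _ < k ^ 2 / κ ^ 2 := by gcongr; linarith
    _ = ((k : ℝ) / κ) ^ 2 := (div_pow ..).symm

theorem stmt17_general (κ k : ℕ) (hκ : 1 ≤ κ) (hk : 0 < k) (ε : ℝ) (hε : ε ≤ 2 / κ ^ 2)
    (part : Fin k → Fin κ)
    (hpart : ∀ i : Fin κ,
      ((Finset.univ.filter fun j : Fin k => part j = i).card) * κ = k)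
    (B : Finset (Sym2 (Fin k)))
    (hB : (B.card : ℝ) ≤ ε * (k.choose 2)) :
    ∃ j : Fin κ → Fin k, (∀ i, part (j i) = i) ∧
      ∀ i i' : Fin κ, i ≠ i' → Sym2.mk (j i) (j i') ∉ B := by
  have hm : ∀ i, #{j | part j = i} = k / κ := fun i ↦
    Nat.eq_div_of_mul_eq_left (by omega) (hpart i)
  have hmκ : ((k / κ : ℕ) : ℝ) = k / κ := by
    rw [eq_div_iff (by positivity), ← hm ⟨0, hκ⟩]
    exact_mod_cast hpart ⟨0, hκ⟩
  have hBm : #B < (k / κ) ^ 2 := by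
    exact_mod_cast hmκ ▸ lt_div_sq_of_le_mul_choose_two hκ hk hε hB
  exact exists_fiberSection_forall_sym2_notMem hm B hBm

/-- Let `κ ≥ 1`, `ε ≤ 2/κ²`, and suppose each of the `κ` classes
of a partition (recorded by `part : Fin k → Fin κ`, assigning to each refined
part `V_j` the original part `U_i` containing it) contains exactly `k/κ` of the
`k` refined parts. If a set `B` of (unordered, non-diagonal) 'bad' pairs of
`[k]` has size at most `ε·C(k,2)`, then one can pick one index in each class so
that no two picked indices form a bad pair. -/
theorem stmt17 (κ k : ℕ) (hκ : 1 ≤ κ) (hk : 0 < k) (ε : ℝ) (hε : ε ≤ 2 / κ ^ 2)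
    (part : Fin k → Fin κ)
    (hpart : ∀ i : Fin κ,
      ((Finset.univ.filter fun j : Fin k => part j = i).card) * κ = k)
    (B : Finset (Sym2 (Fin k))) (hdiag : ∀ p ∈ B, ¬ p.IsDiag)
    (hB : (B.card : ℝ) ≤ ε * (k.choose 2)) :
    ∃ j : Fin κ → Fin k, (∀ i, part (j i) = i) ∧
      ∀ i i' : Fin κ, i ≠ i' → Sym2.mk (j i) (j i') ∉ B :=
  stmt17_general κ k hκ hk ε hε part hpart B hB
end
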